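/- For all positive integers r and p, there is a positive integer m = m(r,p) such that every graph G containing a (≤p)-subdivision of K_m as a subgraph contains either K_{p,p} as a subgraph or a proper (≤p)-subdivision of K_{r,r} as an induced subgraph. -/

import Mathlib

/-!
Every path of the subdivision of `K_m` may be replaced by a chordless path through its vertices.
Colour each 4-set of branch vertices by the length of one of its paths and by the adjacency
relation between the vertices, addressed by their positions, of the six paths it spans; Ramsey's
theorem for 4-sets gives a large homogeneous set of branch vertices. On it all paths have the same
length `L`, and `L = 1` would make the branch vertices a clique. An edge between two paths, spanned
by at most four branch vertices, that is not forced by a shared end is then repeated, by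
homogeneity, between the corresponding vertices of `p` paths and of `p` other paths, which gives
`K_{p,p}`. Without such edges the paths from the first `r` to the next `r` branch vertices form an
induced proper subdivision of `K_{r,r}`.
-/

variable {V : Type} {α : Type}

/-- The vertex set of a walk. -/
def walkVerts (G : SimpleGraph V) {x y : V} (p : G.Walk x y) : Set V :=
  {v | v ∈ p.support}

/-- `(f, P)` witnesses a subgraph of `G` isomorphic to a subdivision of the graph `H`:
`f` is an injection identifying the branch vertices, and for every edge `ab` of `H`,
`P a b _` is a path of `G` (of nonzero length, as its ends are distinct) from `f a` to
`f b`; the paths for `(a, b)` and `(b, a)` are reverses of one another (so the data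
really lives on the edges of `H`); no branch vertex lies in the interior of any path;
and the paths for distinct edges of `H` meet exactly in their common ends.  The union
of these paths is then a subgraph of `G` isomorphic to a subdivision of `H` whose
branch vertices are the vertices `f a`. -/
def IsSubdivision (H : SimpleGraph α) (G : SimpleGraph V) (f : α → V)
    (P : ∀ a b : α, H.Adj a b → G.Walk (f a) (f b)) : Prop :=
  Function.Injective f ∧
  (∀ a b (hab : H.Adj a b), (P a b hab).IsPath) ∧
  (∀ a b (hab : H.Adj a b), P b a hab.symm = (P a b hab).reverse) ∧
  (∀ c a b (hab : H.Adj a b), f c ∈ walkVerts G (P a b hab) → c = a ∨ c = b) ∧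
  (∀ a b a' b' (hab : H.Adj a b) (ha'b' : H.Adj a' b'), s(a, b) ≠ s(a', b') →
    walkVerts G (P a b hab) ∩ walkVerts G (P a' b' ha'b') =
      ({f a, f b} : Set V) ∩ {f a', f b'})

/-- The vertex set of the subdivision of `H` in `G` described by `(f, P)`. -/
def subdivisionVerts (H : SimpleGraph α) (G : SimpleGraph V) (f : α → V)
    (P : ∀ a b : α, H.Adj a b → G.Walk (f a) (f b)) : Set V :=
  Set.range f ∪ {v | ∃ (a : α) (b : α) (hab : H.Adj a b), v ∈ (P a b hab).support}

/-- `(f, P)` witnesses an *induced* subgraph of `G` isomorphic to a subdivision of `H`: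
in addition to `IsSubdivision`, every edge of `G` between two vertices of the
subdivision is an edge of one of its paths. -/
def IsInducedSubdivision (H : SimpleGraph α) (G : SimpleGraph V) (f : α → V)
    (P : ∀ a b : α, H.Adj a b → G.Walk (f a) (f b)) : Prop :=
  IsSubdivision H G f P ∧
  ∀ u v, G.Adj u v → u ∈ subdivisionVerts H G f P → v ∈ subdivisionVerts H G f P →
    ∃ (a : α) (b : α) (hab : H.Adj a b), s(u, v) ∈ (P a b hab).edges


section Ramsey

open Finset

def IsRamseyNumber (k n : ℕ) (C : Type*) (N : ℕ) : Prop :=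
  ∀ {α : Type} [LinearOrder α] (χ : Finset α → C) (A : Finset α), N ≤ #A →
    ∃ S ⊆ A, #S = n ∧ ∃ c, ∀ T ⊆ S, #T = k → χ T = c

theorem isRamseyNumber_zero (n : ℕ) (C : Type*) : IsRamseyNumber 0 n C n := by
  intro α _ χ A hA
  obtain ⟨S, hSA, hS⟩ := exists_subset_card_eq hA
  exact ⟨S, hSA, hS, χ ∅, fun T _ hT => by rw [card_eq_zero.1 hT]⟩

theorem exists_preHomogeneous {k : ℕ} {C : Type*} {R : ℕ → ℕ}
    (hR : ∀ n, IsRamseyNumber k n C (R n)) {α : Type} [LinearOrder α] (χ : Finset α → C)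
    (t : ℕ) (A : Finset α) (hA : (fun N => R N + 1)^[t] 0 ≤ #A) :
    ∃ X ⊆ A, #X = t ∧ ∃ c : α → C,
      ∀ x ∈ X, ∀ T ⊆ X.filter (x < ·), #T = k → χ (insert x T) = c x := by
  induction t generalizing A with
  | zero => exact ⟨∅, empty_subset _, rfl, fun _ => χ ∅, by simp⟩
  | succ t ih =>
    rw [Function.iterate_succ_apply'] at hA
    have hne : A.Nonempty := card_pos.1 (by omega)
    set x₀ := A.min' hne
    have hx₀ : x₀ ∈ A := A.min'_mem hne
    obtain ⟨S, hSA, hS, c₀, hc₀⟩ := hR ((fun N => R N + 1)^[t] 0) (fun T => χ (insert x₀ T))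
      (A.erase x₀) (by rw [card_erase_of_mem hx₀]; omega)
    obtain ⟨X, hXS, hX, c, hc⟩ := ih S hS.ge
    have hx₀X : x₀ ∉ X := fun h => by simpa using hSA (hXS h)
    have hx₀lt : ∀ x ∈ X, x₀ < x := fun x hx =>
      lt_of_le_of_ne (A.min'_le x (mem_of_mem_erase (hSA (hXS hx))))
        (by rintro rfl; exact hx₀X hx)
    refine ⟨insert x₀ X, insert_subset hx₀ (hXS.trans (hSA.trans (erase_subset _ _))),
      by rw [card_insert_of_notMem hx₀X, hX], Function.update c x₀ c₀, ?_⟩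
    intro x hx T hT hTk
    rcases mem_insert.1 hx with rfl | hx
    · rw [Function.update_self]
      refine hc₀ T (fun y hy => ?_) hTk
      obtain ⟨hy, hlt⟩ := mem_filter.1 (hT hy)
      exact hXS ((mem_insert.1 hy).resolve_left hlt.ne')
    · rw [Function.update_of_ne (hx₀lt x hx).ne']
      refine hc x hx T (fun y hy => ?_) hTk
      obtain ⟨hy, hlt⟩ := mem_filter.1 (hT hy)
      rcases mem_insert.1 hy with rfl | hy
      · exact absurd (hx₀lt x hx) (lt_asymm hlt)
      · exact mem_filter.2 ⟨hy, hlt⟩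

theorem exists_isRamseyNumber (k n : ℕ) (C : Type*) [Fintype C] :
    ∃ N, IsRamseyNumber k n C N := by
  induction k generalizing n with
  | zero => exact ⟨n, isRamseyNumber_zero n C⟩
  | succ k ih =>
    choose R hR using ih
    refine ⟨(fun N => R N + 1)^[Fintype.card C * n] 0, fun χ A hA => ?_⟩
    obtain ⟨X, hXA, hX, c, hc⟩ := exists_preHomogeneous hR χ _ A hA
    have : Nonempty C := ⟨χ ∅⟩
    classical
    obtain ⟨y, -, hy⟩ := exists_le_card_fiber_of_mul_le_card_of_maps_to
      (fun x _ => mem_univ (c x)) univ_nonempty (by rw [card_univ, hX])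
    obtain ⟨S, hSX, hS⟩ := exists_subset_card_eq hy
    refine ⟨S, hSX.trans ((filter_subset _ _).trans hXA), hS, y, fun T hTS hT => ?_⟩
    have hTne : T.Nonempty := card_pos.1 (by omega)
    set x := T.min' hTne
    have hxT : x ∈ T := T.min'_mem hTne
    obtain ⟨hxX, hxy⟩ := mem_filter.1 (hSX (hTS hxT))
    rw [← insert_erase hxT, hc x hxX, hxy]
    · intro z hz
      refine mem_filter.2 ⟨(mem_filter.1 (hSX (hTS (mem_of_mem_erase hz)))).1, ?_⟩
      exact lt_of_le_of_ne (T.min'_le z (mem_of_mem_erase hz)) (ne_of_mem_erase hz).symm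
    · rw [card_erase_of_mem hxT, hT]
      rfl

theorem exists_orderEmbedding_monochromatic (k n : ℕ) (C : Type*) [Fintype C] [Nonempty C] :
    ∃ N, ∀ χ : (Fin k ↪o Fin N) → C,
      ∃ e : Fin n ↪o Fin N, ∃ c, ∀ τ : Fin k ↪o Fin n, χ (τ.trans e) = c := by
  obtain ⟨N, hN⟩ := exists_isRamseyNumber k n C
  refine ⟨N, fun χ => ?_⟩
  classical
  obtain ⟨S, -, hS, c, hc⟩ := hN
    (fun T => if h : #T = k then χ (T.orderEmbOfFin h) else Classical.arbitrary C) univ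
    (by rw [card_univ, Fintype.card_fin])
  refine ⟨S.orderEmbOfFin hS, c, fun τ => ?_⟩
  set T := univ.map (τ.trans (S.orderEmbOfFin hS)).toEmbedding
  have hT : #T = k := by simp [T]
  have hTS : T ⊆ S := by
    intro x hx
    obtain ⟨i, -, rfl⟩ := mem_map.1 hx
    exact S.orderEmbOfFin_mem hS _
  have := hc T hTS hT
  rwa [dif_pos hT, ← orderEmbOfFin_unique' hT (fun i => mem_map_of_mem _ (mem_univ i))] at this

end Ramsey

open SimpleGraph

namespace SimpleGraph.Walk

variable {W : Type*} {G : SimpleGraph W} {u v : W}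

theorem isChordless_of_forall_length_le {q : G.Walk u v}
    (hq : ∀ q' : G.Walk u v, q'.support ⊆ q.support → q.length ≤ q'.length) :
    q.IsChordless := by
  have hedge : ∀ i j, i < j → j ≤ q.length → G.Adj (q.getVert i) (q.getVert j) →
      s(q.getVert i, q.getVert j) ∈ q.edges := by
    intro i j hij hj hadj
    obtain rfl | hij' : j = i + 1 ∨ i + 2 ≤ j := by omega
    · exact q.mk_mem_edges_iff_exists.2 ⟨i, by omega, rfl⟩
    · have hsub : ((q.take i).append (cons hadj (q.drop j))).support ⊆ q.support := by
        intro x hx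
        rw [support_append, support_cons, List.tail_cons, List.mem_append] at hx
        rcases hx with hx | hx
        · rw [support_take] at hx
          exact List.mem_of_mem_take hx
        · rw [drop_support_eq_support_drop_min] at hx
          exact List.mem_of_mem_drop hx
      have := hq _ hsub
      simp only [length_append, take_length, length_cons, drop_length] at this
      omega
  rw [isChordless_iff_forall_mem_edges]
  intro x y hx hy hadj
  obtain ⟨i, rfl, hi⟩ := mem_support_iff_exists_getVert.1 hx
  obtain ⟨j, rfl, hj⟩ := mem_support_iff_exists_getVert.1 hy
  rcases lt_trichotomy i j with h | rfl | h
  · exact hedge i j h hj hadj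
  · exact absurd hadj G.irrefl
  · rw [Sym2.eq_swap]
    exact hedge j i h hi hadj.symm

theorem exists_isPath_isChordless (w : G.Walk u v) :
    ∃ q : G.Walk u v, q.IsPath ∧ q.IsChordless ∧ q.length ≤ w.length ∧
      q.support ⊆ w.support := by
  classical
  have hex : ∃ n, ∃ q : G.Walk u v, q.support ⊆ w.support ∧ q.length = n :=
    ⟨_, w, List.Subset.refl _, rfl⟩
  obtain ⟨q, hqw, hq⟩ := Nat.find_spec hex
  have hmin : ∀ q' : G.Walk u v, q'.support ⊆ w.support → Nat.find hex ≤ q'.length :=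
    fun q' h => Nat.find_min' hex ⟨q', h, rfl⟩
  have hbw : q.bypass.support ⊆ w.support :=
    List.Subset.trans (support_bypass_subset_support q) hqw
  refine ⟨q.bypass, bypass_isPath q, isChordless_of_forall_length_le fun q' hq' => ?_,
    (length_bypass_le_length q).trans (hq ▸ hmin w (List.Subset.refl _)), hbw⟩
  exact ((length_bypass_le_length q).trans hq.le).trans (hmin q' (List.Subset.trans hq' hbw))

theorem IsChordless.reverse {q : G.Walk u v} (hq : q.IsChordless) : q.reverse.IsChordless := by
  rw [isChordless_iff_forall_mem_edges] at hq ⊢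
  simpa [support_reverse, edges_reverse] using hq

end SimpleGraph.Walk

theorem SimpleGraph.completeBipartiteGraph_isContained_of_adj {G : SimpleGraph V} {β γ : Type}
    {U : β → V} {W : γ → V} (hU : Function.Injective U) (hW : Function.Injective W)
    (hadj : ∀ a b, G.Adj (U a) (W b)) : completeBipartiteGraph β γ ⊑ G := by
  refine ⟨⟨⟨Sum.elim U W, ?_⟩, ?_⟩⟩
  · rintro (a | a) (b | b) h
    · simp at h
    · exact hadj a b
    · exact (hadj b a).symm
    · simp at h
  · rintro (a | a) (b | b) h
    · exact congrArg _ (hU h)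
    · exact absurd h (hadj a b).ne
    · exact absurd h.symm (hadj b a).ne
    · exact congrArg _ (hW h)

def orderEmbOfChain {ι : Type} [Preorder ι] {i j k l : ι} (hij : i < j) (hjk : j < k)
    (hkl : k < l) : Fin 4 ↪o ι :=
  OrderEmbedding.ofStrictMono ![i, j, k, l] <| Fin.strictMono_iff_lt_succ.2 fun a => by
    fin_cases a
    exacts [hij, hjk, hkl]

section Subdivision

variable {β : Type} {G : SimpleGraph V} {H : SimpleGraph α} {f : α → V}
  {P : ∀ a b : α, H.Adj a b → G.Walk (f a) (f b)}

theorem mem_walkVerts_of_mem_pair {u w x : V} (q : G.Walk u w) (hx : x ∈ ({u, w} : Set V)) :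
    x ∈ walkVerts G q := by
  rcases hx with rfl | rfl
  exacts [q.start_mem_support, q.end_mem_support]

theorem IsSubdivision.of_support_subset (hP : IsSubdivision H G f P)
    {P' : ∀ a b : α, H.Adj a b → G.Walk (f a) (f b)} (hpath : ∀ a b h, (P' a b h).IsPath)
    (hrev : ∀ a b h, P' b a h.symm = (P' a b h).reverse)
    (hsub : ∀ a b h, (P' a b h).support ⊆ (P a b h).support) : IsSubdivision H G f P' := by
  obtain ⟨hinj, -, -, hbranch, hinter⟩ := hP
  refine ⟨hinj, hpath, hrev, fun c a b h hc => hbranch c a b h (hsub a b h hc),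
    fun a b a' b' h h' hne => Set.Subset.antisymm ?_ ?_⟩
  · rintro x ⟨hx, hx'⟩
    rw [← hinter a b a' b' h h' hne]
    exact ⟨hsub a b h hx, hsub a' b' h' hx'⟩
  · rintro x ⟨hx, hx'⟩
    exact ⟨mem_walkVerts_of_mem_pair _ hx, mem_walkVerts_of_mem_pair _ hx'⟩

theorem IsSubdivision.comap {H' : SimpleGraph β} (hP : IsSubdivision H G f P)
    (σ : Copy H' H) :
    IsSubdivision H' G (f ∘ σ) (fun a b h => P (σ a) (σ b) (σ.toHom.map_adj h)) := by
  obtain ⟨hinj, hpath, hrev, hbranch, hinter⟩ := hP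
  refine ⟨hinj.comp σ.injective, fun a b h => hpath _ _ _, fun a b h => hrev _ _ _,
    fun c a b h hc => (hbranch _ _ _ _ hc).imp (σ.injective ·) (σ.injective ·),
    fun a b a' b' h h' hne => hinter _ _ _ _ _ _ fun he => hne ?_⟩
  exact Sym2.map.injective σ.injective (by simpa using he)

end Subdivision

structure PathSystem (G : SimpleGraph V) (ι : Type) (p : ℕ) where
  branch : ι → V
  path : ∀ i j, (⊤ : SimpleGraph ι).Adj i j → G.Walk (branch i) (branch j)
  isSubdivision : IsSubdivision ⊤ G branch path
  isChordless : ∀ i j h, (path i j h).IsChordless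
  length_le : ∀ i j h, (path i j h).length ≤ p + 1

theorem IsSubdivision.exists_pathSystem {G : SimpleGraph V} {p : ℕ} [LinearOrder α]
    {f : α → V} {P : ∀ a b : α, (⊤ : SimpleGraph α).Adj a b → G.Walk (f a) (f b)}
    (hP : IsSubdivision ⊤ G f P) (hlen : ∀ a b h, (P a b h).length ≤ p + 1) :
    Nonempty (PathSystem G α p) := by
  choose q hpath hchord hlen' hsub using fun a b (h : a < b) =>
    (P a b h.ne).exists_isPath_isChordless
  let P' : ∀ a b : α, (⊤ : SimpleGraph α).Adj a b → G.Walk (f a) (f b) := fun a b h =>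
    if hab : a < b then q a b hab else (q b a (h.symm.lt_of_le (not_lt.1 hab))).reverse
  have hcases : ∀ a b h, (∃ hab : a < b, P' a b h = q a b hab) ∨
      ∃ hba : b < a, P' a b h = (q b a hba).reverse := by
    intro a b h
    by_cases hab : a < b
    · exact .inl ⟨hab, dif_pos hab⟩
    · exact .inr ⟨_, dif_neg hab⟩
  have hrev : ∀ a b h, P' b a h.symm = (P' a b h).reverse := by
    intro a b h
    rcases lt_or_gt_of_ne h with hab | hba
    · simp [P', hab, not_lt_of_gt hab]
    · simp [P', hba, not_lt_of_gt hba]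
  refine ⟨⟨f, P', hP.of_support_subset ?_ hrev ?_, ?_, ?_⟩⟩
  · intro a b h
    rcases hcases a b h with ⟨hab, he⟩ | ⟨hba, he⟩ <;> rw [he]
    exacts [hpath a b hab, (hpath b a hba).reverse]
  · intro a b h x hx
    rcases hcases a b h with ⟨hab, he⟩ | ⟨hba, he⟩ <;> rw [he] at hx
    · exact hsub a b hab hx
    · rw [Walk.support_reverse, List.mem_reverse] at hx
      have := hsub b a hba hx
      rwa [hP.2.2.1 a b h, Walk.support_reverse, List.mem_reverse] at this
  · intro a b h
    rcases hcases a b h with ⟨hab, he⟩ | ⟨hba, he⟩ <;> rw [he]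
    exacts [hchord a b hab, (hchord b a hba).reverse]
  · intro a b h
    rcases hcases a b h with ⟨hab, he⟩ | ⟨hba, he⟩ <;> rw [he]
    · exact (hlen' a b hab).trans (hlen a b _)
    · rw [Walk.length_reverse]
      exact (hlen' b a hba).trans (hlen b a _)

namespace PathSystem

variable {G : SimpleGraph V} {p : ℕ} {ι κ : Type}

def comap (F : PathSystem G ι p) (e : κ ↪ ι) : PathSystem G κ p where
  branch := F.branch ∘ e
  path i j h := F.path (e i) (e j) (e.injective.ne h)
  isSubdivision := F.isSubdivision.comap (Embedding.completeGraph e).toCopy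
  isChordless _ _ _ := F.isChordless _ _ _
  length_le _ _ _ := F.length_le _ _ _

theorem length_path_comm (F : PathSystem G ι p) {i j : ι} (h : (⊤ : SimpleGraph ι).Adj i j) :
    (F.path j i h.symm).length = (F.path i j h).length := by
  rw [F.isSubdivision.2.2.1, Walk.length_reverse]

theorem mem_support_path_comm (F : PathSystem G ι p) {i j : ι}
    (h : (⊤ : SimpleGraph ι).Adj i j) {x : V} :
    x ∈ (F.path j i h.symm).support ↔ x ∈ (F.path i j h).support := by
  rw [F.isSubdivision.2.2.1, Walk.support_reverse, List.mem_reverse]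

section Positions

variable [LinearOrder ι] (F : PathSystem G ι p)

def vtx (i j : ι) (s : ℕ) : V :=
  if h : i < j then (F.path i j h.ne).getVert s else F.branch i

def len (i j : ι) : ℕ :=
  if h : i < j then (F.path i j h.ne).length else 0

variable {F} {i j i' j' : ι}

theorem vtx_of_lt (h : i < j) (s : ℕ) : F.vtx i j s = (F.path i j h.ne).getVert s :=
  dif_pos h

theorem len_of_lt (h : i < j) : F.len i j = (F.path i j h.ne).length :=
  dif_pos h

theorem len_le (i j : ι) : F.len i j ≤ p + 1 := by
  unfold len
  split
  exacts [F.length_le _ _ _, Nat.zero_le _]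

theorem lt_add_two_of_le_len {s : ℕ} (hs : s ≤ F.len i j) : s < p + 2 :=
  Nat.lt_succ_of_le (hs.trans (F.len_le i j))

theorem vtx_zero (i j : ι) : F.vtx i j 0 = F.branch i := by
  unfold vtx
  split
  exacts [Walk.getVert_zero _, rfl]

theorem vtx_len (h : i < j) : F.vtx i j (F.len i j) = F.branch j := by
  rw [vtx_of_lt h, len_of_lt h, Walk.getVert_length]

theorem vtx_mem_support (h : i < j) (s : ℕ) : F.vtx i j s ∈ (F.path i j h.ne).support := by
  rw [vtx_of_lt h]
  exact Walk.getVert_mem_support _ _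

theorem exists_vtx_eq_of_mem_support (h : i < j) {x : V}
    (hx : x ∈ (F.path i j h.ne).support) : ∃ s ≤ F.len i j, F.vtx i j s = x := by
  obtain ⟨s, hs, hsl⟩ := Walk.mem_support_iff_exists_getVert.1 hx
  exact ⟨s, len_of_lt h ▸ hsl, (vtx_of_lt h s).trans hs⟩

theorem vtx_injOn (h : i < j) {s t : ℕ} (hs : s ≤ F.len i j) (ht : t ≤ F.len i j)
    (heq : F.vtx i j s = F.vtx i j t) : s = t := by
  rw [len_of_lt h] at hs ht
  rw [vtx_of_lt h, vtx_of_lt h] at heq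
  exact (F.isSubdivision.2.1 i j h.ne).getVert_injOn hs ht heq

theorem eq_zero_of_vtx_eq_branch (h : i < j) {s : ℕ} (hs : s ≤ F.len i j)
    (heq : F.vtx i j s = F.branch i) : s = 0 :=
  vtx_injOn h hs (Nat.zero_le _) (heq.trans (vtx_zero i j).symm)

theorem eq_len_of_vtx_eq_branch (h : i < j) {s : ℕ} (hs : s ≤ F.len i j)
    (heq : F.vtx i j s = F.branch j) : s = F.len i j :=
  vtx_injOn h hs le_rfl (heq.trans (vtx_len h).symm)

theorem mem_inter (h : i < j) (h' : i' < j') (hne : ¬(i = i' ∧ j = j')) {x : V}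
    (hx : x ∈ (F.path i j h.ne).support) (hx' : x ∈ (F.path i' j' h'.ne).support) :
    (x = F.branch i ∨ x = F.branch j) ∧ (x = F.branch i' ∨ x = F.branch j') := by
  have hsym : s(i, j) ≠ s(i', j') := by
    rw [Ne, Sym2.eq_iff]
    rintro (he | ⟨rfl, rfl⟩)
    exacts [hne he, lt_asymm h h']
  have := F.isSubdivision.2.2.2.2 i j i' j' h.ne h'.ne hsym ▸
    (show x ∈ walkVerts G (F.path i j h.ne) ∩ walkVerts G (F.path i' j' h'.ne) from ⟨hx, hx'⟩)
  simpa only [Set.mem_inter_iff, Set.mem_insert_iff, Set.mem_singleton_iff] using this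

theorem eq_of_vtx_eq (h : i < j) (h' : i' < j') {s t : ℕ} (hs : s ≤ F.len i j)
    (ht : t ≤ F.len i' j') (heq : F.vtx i j s = F.vtx i' j' t) :
    (i = i' ∧ j = j' ∧ s = t) ∨ (s = 0 ∧ t = 0 ∧ i = i') ∨ (s = 0 ∧ t = F.len i' j' ∧ i = j') ∨
      (s = F.len i j ∧ t = 0 ∧ j = i') ∨ (s = F.len i j ∧ t = F.len i' j' ∧ j = j') := by
  by_cases hp : i = i' ∧ j = j'
  · obtain ⟨rfl, rfl⟩ := hp
    exact .inl ⟨rfl, rfl, vtx_injOn h hs ht heq⟩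
  obtain ⟨h₁ | h₁, h₂ | h₂⟩ :=
    F.mem_inter h h' hp (F.vtx_mem_support h s) (heq ▸ F.vtx_mem_support h' t)
  all_goals
    have hinj := F.isSubdivision.1 (h₁.symm.trans h₂)
    subst hinj
    rw [heq] at h₂
  · refine .inr (.inl ⟨?_, ?_, rfl⟩)
    exacts [eq_zero_of_vtx_eq_branch h hs h₁, eq_zero_of_vtx_eq_branch h' ht h₂]
  · refine .inr (.inr (.inl ⟨?_, ?_, rfl⟩))
    exacts [eq_zero_of_vtx_eq_branch h hs h₁, eq_len_of_vtx_eq_branch h' ht h₂]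
  · refine .inr (.inr (.inr (.inl ⟨?_, ?_, rfl⟩)))
    exacts [eq_len_of_vtx_eq_branch h hs h₁, eq_zero_of_vtx_eq_branch h' ht h₂]
  · refine .inr (.inr (.inr (.inr ⟨?_, ?_, rfl⟩)))
    exacts [eq_len_of_vtx_eq_branch h hs h₁, eq_len_of_vtx_eq_branch h' ht h₂]

theorem vtx_comap [LinearOrder κ] (F : PathSystem G ι p) (e : κ ↪o ι) (i j : κ) (s : ℕ) :
    (F.comap e.toEmbedding).vtx i j s = F.vtx (e i) (e j) s := by
  by_cases h : i < j
  · rw [vtx_of_lt h, vtx_of_lt (e.strictMono h)]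
    rfl
  · rw [vtx, dif_neg h, vtx, dif_neg (by simpa using h)]
    rfl

theorem len_comap [LinearOrder κ] (F : PathSystem G ι p) (e : κ ↪o ι) (i j : κ) :
    (F.comap e.toEmbedding).len i j = F.len (e i) (e j) := by
  by_cases h : i < j
  · rw [len_of_lt h, len_of_lt (e.strictMono h)]
    rfl
  · rw [len, dif_neg h, len, dif_neg (by simpa using h)]

end Positions

section Homogeneous

abbrev Pattern (p : ℕ) : Type :=
  Fin (p + 2) × (Fin 4 × Fin 4 × Fin (p + 2) → Fin 4 × Fin 4 × Fin (p + 2) → Prop)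

variable [LinearOrder ι]

/-- The colour of a 4-tuple `τ` of branch vertices: the length of the path from `τ 0` to `τ 1`,
and which vertices of the six paths between entries of `τ`, addressed by the two entries and
the position on the path, are adjacent. -/
def pattern (F : PathSystem G ι p) (τ : Fin 4 ↪o ι) : Pattern p :=
  (⟨F.len (τ 0) (τ 1), lt_add_two_of_le_len le_rfl⟩,
    fun x y => G.Adj (F.vtx (τ x.1) (τ x.2.1) x.2.2) (F.vtx (τ y.1) (τ y.2.1) y.2.2))

theorem pattern_comap [LinearOrder κ] (F : PathSystem G ι p) (e : κ ↪o ι) (τ : Fin 4 ↪o κ) :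
    (F.comap e.toEmbedding).pattern τ = F.pattern (τ.trans e) :=
  Prod.ext (Fin.ext (len_comap F e _ _)) <| funext fun x => funext fun y => by
    simp only [pattern, vtx_comap]
    rfl

def IsHomogeneous (F : PathSystem G ι p) : Prop :=
  ∀ τ τ' : Fin 4 ↪o ι, F.pattern τ = F.pattern τ'

theorem IsHomogeneous.adj_vtx {F : PathSystem G ι p} (hF : F.IsHomogeneous)
    (τ τ' : Fin 4 ↪o ι) (q₁ q₂ q₃ q₄ : Fin 4) (s t : Fin (p + 2))
    (h : G.Adj (F.vtx (τ q₁) (τ q₂) s) (F.vtx (τ q₃) (τ q₄) t)) :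
    G.Adj (F.vtx (τ' q₁) (τ' q₂) s) (F.vtx (τ' q₃) (τ' q₄) t) :=
  (congrFun (congrFun (congrArg Prod.snd (hF τ τ')) (q₁, q₂, s)) (q₃, q₄, t)).mp h

end Homogeneous

-- The indices `n` and `n + 1` are kept free to pad shorter tuples to 4-tuples.
variable {n : ℕ} {F : PathSystem G (Fin (n + 2)) p}

theorem IsHomogeneous.len_eq (hF : F.IsHomogeneous) {i j i' j' : Fin (n + 2)} (h : i < j)
    (hj : j.val < n) (h' : i' < j') (hj' : j'.val < n) : F.len i j = F.len i' j' := by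
  have htop : (⟨n, by omega⟩ : Fin (n + 2)) < ⟨n + 1, by omega⟩ := Fin.mk_lt_mk.2 (by omega)
  exact congrArg (fun c => (c.1 : ℕ)) (hF (orderEmbOfChain h (Fin.mk_lt_mk.2 hj) htop)
    (orderEmbOfChain h' (Fin.mk_lt_mk.2 hj') htop))

theorem eq_of_vtx_mk_eq {L : ℕ} (hL : ∀ a b : Fin (n + 2), a < b → b.val < n → F.len a b = L)
    {a b a' b' s t : ℕ} (h : a < b) (hb : b < n) (h' : a' < b') (hb' : b' < n) (hs : s ≤ L)
    (ht : t ≤ L)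
    (heq : F.vtx ⟨a, by omega⟩ ⟨b, by omega⟩ s = F.vtx ⟨a', by omega⟩ ⟨b', by omega⟩ t) :
    (a = a' ∧ b = b' ∧ s = t) ∨ (s = 0 ∧ t = 0 ∧ a = a') ∨ (s = 0 ∧ t = L ∧ a = b') ∨
      (s = L ∧ t = 0 ∧ b = a') ∨ (s = L ∧ t = L ∧ b = b') := by
  have hab := hL ⟨a, by omega⟩ ⟨b, by omega⟩ (Fin.mk_lt_mk.2 h) hb
  have hab' := hL ⟨a', by omega⟩ ⟨b', by omega⟩ (Fin.mk_lt_mk.2 h') hb'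
  have := eq_of_vtx_eq (Fin.mk_lt_mk.2 h) (Fin.mk_lt_mk.2 h') (hab ▸ hs) (hab' ▸ ht) heq
  simpa only [hab, hab', Fin.mk.injEq] using this

theorem IsHomogeneous.one_lt_len (hF : F.IsHomogeneous)
    (hK : ¬ completeBipartiteGraph (Fin p) (Fin p) ⊑ G) (hn : 2 * p ≤ n) {i j : Fin (n + 2)}
    (h : i < j) (hj : j.val < n) : 1 < F.len i j := by
  have hpos : F.len i j ≠ 0 := fun h0 =>
    h.ne (F.isSubdivision.1 (by rw [← vtx_zero i j, ← vtx_len h, h0]))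
  refine lt_of_le_of_ne (Nat.one_le_iff_ne_zero.2 hpos) fun h1 => hK ?_
  have hadj : ∀ a b : Fin (n + 2), a < b → b.val < n → G.Adj (F.branch a) (F.branch b) :=
    fun a b hab hb => Walk.adj_of_length_eq_one ((len_of_lt hab).symm.trans
      ((hF.len_eq hab hb h hj).trans h1.symm))
  refine completeBipartiteGraph_isContained_of_adj
    (U := fun a : Fin p => F.branch ⟨a, by omega⟩)
    (W := fun b : Fin p => F.branch ⟨p + b, by omega⟩) (fun a a' h => ?_) (fun b b' h => ?_)
    fun a b => hadj _ _ (Fin.mk_lt_mk.2 (by omega)) (show p + b < n by omega)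
  all_goals
    have := F.isSubdivision.1 h
    simp only [Fin.mk.injEq] at this
    omega

theorem IsHomogeneous.not_adj_of_common_left (hF : F.IsHomogeneous)
    (hK : ¬ completeBipartiteGraph (Fin p) (Fin p) ⊑ G) (hn : 4 * p ≤ n) {i j k : Fin (n + 2)}
    (hij : i < j) (hjk : j < k) (hk : k.val < n) {s t : ℕ} (hs₀ : 0 < s) (hs : s ≤ F.len i j)
    (ht₀ : 0 < t) (ht : t ≤ F.len i k) : ¬ G.Adj (F.vtx i j s) (F.vtx i k t) := by
  intro hadj
  have hL : ∀ a b : Fin (n + 2), a < b → b.val < n → F.len a b = F.len i j :=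
    fun a b h hb => hF.len_eq h hb hij (by omega)
  rw [hL i k (hij.trans hjk) hk] at ht
  refine hK (completeBipartiteGraph_isContained_of_adj
    (U := fun a : Fin p => F.vtx ⟨0, by omega⟩ ⟨a + 1, by omega⟩ s)
    (W := fun b : Fin p => F.vtx ⟨0, by omega⟩ ⟨p + b + 1, by omega⟩ t)
    (fun a a' h => ?_) (fun b b' h => ?_) fun a b => ?_)
  · have := eq_of_vtx_mk_eq hL (by omega) (by omega) (by omega) (by omega) hs hs h
    omega
  · have := eq_of_vtx_mk_eq hL (by omega) (by omega) (by omega) (by omega) ht ht h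
    omega
  · exact hF.adj_vtx (orderEmbOfChain hij hjk (Fin.mk_lt_mk.2 (by omega) : k < ⟨n + 1, by omega⟩))
      (orderEmbOfChain (i := ⟨0, by omega⟩) (j := ⟨a + 1, by omega⟩) (k := ⟨p + b + 1, by omega⟩)
        (l := ⟨n + 1, by omega⟩) (Fin.mk_lt_mk.2 (by omega)) (Fin.mk_lt_mk.2 (by omega))
        (Fin.mk_lt_mk.2 (by omega)))
      0 1 0 2 ⟨s, lt_add_two_of_le_len hs⟩ ⟨t, lt_add_two_of_le_len ht⟩ hadj

theorem IsHomogeneous.not_adj_of_common_right (hF : F.IsHomogeneous)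
    (hK : ¬ completeBipartiteGraph (Fin p) (Fin p) ⊑ G) (hn : 4 * p ≤ n) {i j k : Fin (n + 2)}
    (hij : i < j) (hjk : j < k) (hk : k.val < n) {s t : ℕ} (hs : s < F.len i k)
    (ht : t < F.len j k) : ¬ G.Adj (F.vtx i k s) (F.vtx j k t) := by
  intro hadj
  have hL : ∀ a b : Fin (n + 2), a < b → b.val < n → F.len a b = F.len i k :=
    fun a b h hb => hF.len_eq h hb (hij.trans hjk) hk
  rw [hL j k hjk hk] at ht
  refine hK (completeBipartiteGraph_isContained_of_adj
    (U := fun a : Fin p => F.vtx ⟨a, by omega⟩ ⟨2 * p, by omega⟩ s)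
    (W := fun b : Fin p => F.vtx ⟨p + b, by omega⟩ ⟨2 * p, by omega⟩ t)
    (fun a a' h => ?_) (fun b b' h => ?_) fun a b => ?_)
  · have := eq_of_vtx_mk_eq hL (by omega) (by omega) (by omega) (by omega) hs.le hs.le h
    omega
  · have := eq_of_vtx_mk_eq hL (by omega) (by omega) (by omega) (by omega) ht.le ht.le h
    omega
  · exact hF.adj_vtx (orderEmbOfChain hij hjk (Fin.mk_lt_mk.2 (by omega) : k < ⟨n + 1, by omega⟩))
      (orderEmbOfChain (i := ⟨a, by omega⟩) (j := ⟨p + b, by omega⟩) (k := ⟨2 * p, by omega⟩)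
        (l := ⟨n + 1, by omega⟩) (Fin.mk_lt_mk.2 (by omega)) (Fin.mk_lt_mk.2 (by omega))
        (Fin.mk_lt_mk.2 (by omega)))
      0 2 1 2 ⟨s, lt_add_two_of_le_len hs.le⟩ ⟨t, lt_add_two_of_le_len ht.le⟩ hadj

theorem IsHomogeneous.not_adj_of_crossing (hF : F.IsHomogeneous)
    (hK : ¬ completeBipartiteGraph (Fin p) (Fin p) ⊑ G) (hn : 4 * p ≤ n) {i j k l : Fin (n + 2)}
    (hij : i < j) (hjk : j < k) (hkl : k < l) (hl : l.val < n) {s t : ℕ} (hs : s ≤ F.len i k)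
    (ht : t ≤ F.len j l) : ¬ G.Adj (F.vtx i k s) (F.vtx j l t) := by
  intro hadj
  have hL : ∀ a b : Fin (n + 2), a < b → b.val < n → F.len a b = F.len i k :=
    fun a b h hb => hF.len_eq h hb (hij.trans hjk) (by omega)
  rw [hL j l (hjk.trans hkl) hl] at ht
  refine hK (completeBipartiteGraph_isContained_of_adj
    (U := fun a : Fin p => F.vtx ⟨a, by omega⟩ ⟨2 * p + a, by omega⟩ s)
    (W := fun b : Fin p => F.vtx ⟨p + b, by omega⟩ ⟨3 * p + b, by omega⟩ t)
    (fun a a' h => ?_) (fun b b' h => ?_) fun a b => ?_)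
  · have := eq_of_vtx_mk_eq hL (by omega) (by omega) (by omega) (by omega) hs hs h
    omega
  · have := eq_of_vtx_mk_eq hL (by omega) (by omega) (by omega) (by omega) ht ht h
    omega
  · exact hF.adj_vtx (orderEmbOfChain hij hjk hkl)
      (orderEmbOfChain (i := ⟨a, by omega⟩) (j := ⟨p + b, by omega⟩) (k := ⟨2 * p + a, by omega⟩)
        (l := ⟨3 * p + b, by omega⟩) (Fin.mk_lt_mk.2 (by omega)) (Fin.mk_lt_mk.2 (by omega))
        (Fin.mk_lt_mk.2 (by omega)))
      0 2 1 3 ⟨s, lt_add_two_of_le_len hs⟩ ⟨t, lt_add_two_of_le_len ht⟩ hadj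

theorem IsHomogeneous.not_adj_of_nested (hF : F.IsHomogeneous)
    (hK : ¬ completeBipartiteGraph (Fin p) (Fin p) ⊑ G) (hn : 4 * p ≤ n) {i j k l : Fin (n + 2)}
    (hij : i < j) (hjk : j < k) (hkl : k < l) (hl : l.val < n) {s t : ℕ} (hs : s ≤ F.len i l)
    (ht : t ≤ F.len j k) : ¬ G.Adj (F.vtx i l s) (F.vtx j k t) := by
  intro hadj
  have hL : ∀ a b : Fin (n + 2), a < b → b.val < n → F.len a b = F.len i l :=
    fun a b h hb => hF.len_eq h hb (hij.trans (hjk.trans hkl)) hl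
  rw [hL j k hjk (by omega)] at ht
  refine hK (completeBipartiteGraph_isContained_of_adj
    (U := fun a : Fin p => F.vtx ⟨a, by omega⟩ ⟨3 * p + a, by omega⟩ s)
    (W := fun b : Fin p => F.vtx ⟨p + b, by omega⟩ ⟨2 * p + b, by omega⟩ t)
    (fun a a' h => ?_) (fun b b' h => ?_) fun a b => ?_)
  · have := eq_of_vtx_mk_eq hL (by omega) (by omega) (by omega) (by omega) hs hs h
    omega
  · have := eq_of_vtx_mk_eq hL (by omega) (by omega) (by omega) (by omega) ht ht h
    omega
  · exact hF.adj_vtx (orderEmbOfChain hij hjk hkl)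
      (orderEmbOfChain (i := ⟨a, by omega⟩) (j := ⟨p + b, by omega⟩) (k := ⟨2 * p + b, by omega⟩)
        (l := ⟨3 * p + a, by omega⟩) (Fin.mk_lt_mk.2 (by omega)) (Fin.mk_lt_mk.2 (by omega))
        (Fin.mk_lt_mk.2 (by omega)))
      0 3 1 2 ⟨s, lt_add_two_of_le_len hs⟩ ⟨t, lt_add_two_of_le_len ht⟩ hadj

theorem IsHomogeneous.mem_edges_of_adj (hF : F.IsHomogeneous)
    (hK : ¬ completeBipartiteGraph (Fin p) (Fin p) ⊑ G) (hn : 4 * p ≤ n)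
    {i₁ j₁ i₂ j₂ : Fin (n + 2)} (h₁ : i₁ < j₁) (h₂ : i₂ < j₂) (h₁₂ : i₁ < j₂) (h₂₁ : i₂ < j₁)
    (hj₁ : j₁.val < n) (hj₂ : j₂.val < n) {u v : V} (hu : u ∈ (F.path i₁ j₁ h₁.ne).support)
    (hv : v ∈ (F.path i₂ j₂ h₂.ne).support) (huv : G.Adj u v) :
    s(u, v) ∈ (F.path i₁ j₁ h₁.ne).edges ∨ s(u, v) ∈ (F.path i₂ j₂ h₂.ne).edges := by
  by_cases hu₂ : u ∈ (F.path i₂ j₂ h₂.ne).support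
  · exact .inr ((F.isChordless _ _ _).mem_edges hu₂ hv huv)
  by_cases hv₁ : v ∈ (F.path i₁ j₁ h₁.ne).support
  · exact .inl ((F.isChordless _ _ _).mem_edges hu hv₁ huv)
  exfalso
  obtain ⟨s, hs, rfl⟩ := F.exists_vtx_eq_of_mem_support h₁ hu
  obtain ⟨t, ht, rfl⟩ := F.exists_vtx_eq_of_mem_support h₂ hv
  rcases eq_or_ne i₁ i₂ with rfl | hi
  · have hs₀ : 0 < s := Nat.pos_of_ne_zero <| by
      rintro rfl; exact hu₂ (by rw [vtx_zero]; exact Walk.start_mem_support _)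
    have ht₀ : 0 < t := Nat.pos_of_ne_zero <| by
      rintro rfl; exact hv₁ (by rw [vtx_zero]; exact Walk.start_mem_support _)
    rcases lt_trichotomy j₁ j₂ with hj | rfl | hj
    · exact hF.not_adj_of_common_left hK hn h₁ hj hj₂ hs₀ hs ht₀ ht huv
    · exact hu₂ hu
    · exact hF.not_adj_of_common_left hK hn h₂ hj hj₁ ht₀ ht hs₀ hs huv.symm
  rcases eq_or_ne j₁ j₂ with rfl | hj
  · have hs' : s < F.len i₁ j₁ := lt_of_le_of_ne hs <| by
      rintro rfl; exact hu₂ (by rw [vtx_len h₁]; exact Walk.end_mem_support _)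
    have ht' : t < F.len i₂ j₁ := lt_of_le_of_ne ht <| by
      rintro rfl; exact hv₁ (by rw [vtx_len h₂]; exact Walk.end_mem_support _)
    rcases lt_or_gt_of_ne hi with hi | hi
    · exact hF.not_adj_of_common_right hK hn hi h₂ hj₁ hs' ht' huv
    · exact hF.not_adj_of_common_right hK hn hi h₁ hj₁ ht' hs' huv.symm
  rcases lt_or_gt_of_ne hi with hi | hi <;> rcases lt_or_gt_of_ne hj with hj | hj
  · exact hF.not_adj_of_crossing hK hn hi h₂₁ hj hj₂ hs ht huv
  · exact hF.not_adj_of_nested hK hn hi h₂ hj hj₁ hs ht huv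
  · exact hF.not_adj_of_nested hK hn hi h₁ hj hj₂ ht hs huv.symm
  · exact hF.not_adj_of_crossing hK hn hi h₁₂ hj hj₁ ht hs huv.symm


theorem IsHomogeneous.isContained_or_isInducedSubdivision (hF : F.IsHomogeneous) {r : ℕ}
    (hn : 4 * p ≤ n) (hr : 2 * r ≤ n) :
    completeBipartiteGraph (Fin p) (Fin p) ⊑ G ∨
      ∃ (g : Fin r ⊕ Fin r → V)
        (Q : ∀ a b : Fin r ⊕ Fin r, (completeBipartiteGraph (Fin r) (Fin r)).Adj a b →
          G.Walk (g a) (g b)),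
        IsInducedSubdivision (completeBipartiteGraph (Fin r) (Fin r)) G g Q ∧
        (∀ a b (hab : (completeBipartiteGraph (Fin r) (Fin r)).Adj a b),
          2 ≤ (Q a b hab).length ∧ (Q a b hab).length ≤ p + 1) := by
  by_cases hK : completeBipartiteGraph (Fin p) (Fin p) ⊑ G
  · exact .inl hK
  right
  let σ : Fin r ⊕ Fin r ↪ Fin (n + 2) :=
    finSumFinEquiv.toEmbedding.trans (Fin.castLEEmb (by omega))
  let σc : Copy (completeBipartiteGraph (Fin r) (Fin r)) ⊤ :=
    (Embedding.completeGraph σ).toCopy.comp (Copy.ofLE _ _ le_top)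
  have hlt : ∀ a b : Fin r, σ (.inl a) < σ (.inr b) := fun a b =>
    show (a : ℕ) < r + b by omega
  have hmem : ∀ x ∈ subdivisionVerts _ G (F.branch ∘ σc) fun a b h =>
      F.path _ _ (σc.toHom.map_adj h),
      ∃ a b : Fin r, x ∈ (F.path _ _ (hlt a b).ne).support := by
    rintro x (⟨a | b, rfl⟩ | ⟨a | a, b | b, hab, hx⟩)
    · exact ⟨a, a, Walk.start_mem_support _⟩
    · exact ⟨b, b, Walk.end_mem_support _⟩
    · simp at hab
    · exact ⟨a, b, hx⟩
    · exact ⟨b, a, (F.mem_support_path_comm (hlt b a).ne).1 hx⟩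
    · simp at hab
  refine ⟨_, _, ⟨F.isSubdivision.comap σc, fun u v huv hu hv => ?_⟩, fun a b hab => ?_⟩
  · obtain ⟨a₁, b₁, hu⟩ := hmem u hu
    obtain ⟨a₂, b₂, hv⟩ := hmem v hv
    rcases hF.mem_edges_of_adj hK hn (hlt a₁ b₁) (hlt a₂ b₂) (hlt a₁ b₂) (hlt a₂ b₁)
      (show r + b₁ < n by omega) (show r + b₂ < n by omega) hu hv huv with h | h
    exacts [⟨.inl a₁, .inr b₁, by simp, h⟩, ⟨.inl a₂, .inr b₂, by simp, h⟩]
  · refine ⟨?_, F.length_le _ _ _⟩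
    rcases a with a | a <;> rcases b with b | b
    · simp at hab
    · have := hF.one_lt_len hK (by omega) (hlt a b) (show r + b < n by omega)
      rw [len_of_lt (hlt a b)] at this
      exact this
    · have := hF.one_lt_len hK (by omega) (hlt b a) (show r + a < n by omega)
      rw [len_of_lt (hlt b a), ← F.length_path_comm] at this
      exact this
    · simp at hab

end PathSystem

theorem statement_7_general (r p : ℕ) :
    ∃ m : ℕ, 0 < m ∧
      ∀ (V : Type) [Fintype V] [DecidableEq V] (G : SimpleGraph V) (f : Fin m → V)
        (P : ∀ a b : Fin m, (⊤ : SimpleGraph (Fin m)).Adj a b → G.Walk (f a) (f b)),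
        IsSubdivision ⊤ G f P →
        (∀ a b (hab : (⊤ : SimpleGraph (Fin m)).Adj a b), (P a b hab).length ≤ p + 1) →
        (∃ g : completeBipartiteGraph (Fin p) (Fin p) →g G, Function.Injective g) ∨
        ∃ (g : Fin r ⊕ Fin r → V)
          (Q : ∀ a b : Fin r ⊕ Fin r, (completeBipartiteGraph (Fin r) (Fin r)).Adj a b →
            G.Walk (g a) (g b)),
          IsInducedSubdivision (completeBipartiteGraph (Fin r) (Fin r)) G g Q ∧
          (∀ a b (hab : (completeBipartiteGraph (Fin r) (Fin r)).Adj a b),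
            2 ≤ (Q a b hab).length ∧ (Q a b hab).length ≤ p + 1) := by
  obtain ⟨N, hN⟩ :=
    exists_orderEmbedding_monochromatic 4 (4 * p + 2 * r + 2) (PathSystem.Pattern p)
  refine ⟨N, ?_, fun V _ _ G f P hP hlen => ?_⟩
  · obtain ⟨e, -⟩ := hN fun _ => Classical.arbitrary _
    exact (e 0).pos
  obtain ⟨F⟩ := hP.exists_pathSystem hlen
  obtain ⟨e, c, hc⟩ := hN F.pattern
  have hF : (F.comap e.toEmbedding).IsHomogeneous := fun τ τ' => by
    rw [F.pattern_comap, F.pattern_comap, hc, hc]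
  rcases hF.isContained_or_isInducedSubdivision (n := 4 * p + 2 * r) (r := r) (by omega)
    (by omega) with ⟨⟨c⟩⟩ | h
  exacts [.inl ⟨c.toHom, c.injective⟩, .inr h]

/-- **Theorem 1.1 (Lozin–Razgon).** For all `r, p ∈ ℕ⁺` there is `m = m(r,p) ∈ ℕ⁺`
such that every graph `G` containing a `(≤ p)`-subdivision of `K_m` as a subgraph
(witnessed by branch vertices `f` and subdivision paths `P` of length at most `p + 1`)
contains either `K_{p,p}` as a subgraph (an injective graph homomorphism from
`K_{p,p}`), or a proper `(≤ p)`-subdivision of `K_{r,r}` as an induced subgraph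
(witnessed by `g` and `Q`, all paths of length at least `2` and at most `p + 1`). -/
theorem statement_7 (r p : ℕ) (hr : 0 < r) (hp : 0 < p) :
    ∃ m : ℕ, 0 < m ∧
      ∀ (V : Type) [Fintype V] [DecidableEq V] (G : SimpleGraph V) (f : Fin m → V)
        (P : ∀ a b : Fin m, (⊤ : SimpleGraph (Fin m)).Adj a b → G.Walk (f a) (f b)),
        IsSubdivision ⊤ G f P →
        (∀ a b (hab : (⊤ : SimpleGraph (Fin m)).Adj a b), (P a b hab).length ≤ p + 1) →
        (∃ g : completeBipartiteGraph (Fin p) (Fin p) →g G, Function.Injective g) ∨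
        ∃ (g : Fin r ⊕ Fin r → V)
          (Q : ∀ a b : Fin r ⊕ Fin r, (completeBipartiteGraph (Fin r) (Fin r)).Adj a b →
            G.Walk (g a) (g b)),
          IsInducedSubdivision (completeBipartiteGraph (Fin r) (Fin r)) G g Q ∧
          (∀ a b (hab : (completeBipartiteGraph (Fin r) (Fin r)).Adj a b),
            2 ≤ (Q a b hab).length ∧ (Q a b hab).length ≤ p + 1) :=
  statement_7_general r p
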